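/- arXiv:1501.01409 — 5 statements merged into one kernel-verified Lean document; each statement's English description precedes it below -/
import Mathlib

section
/- Let n, m, r be positive integers, let A : ℝ → Mat(n,n) and C : ℝ → Mat(m,n) be continuous matrix-valued functions and W ∈ Mat(m,m) a symmetric positive semidefinite matrix. Suppose L : [0,∞) → Mat(n,r) is differentiable with L'(t) = A(t) L(t), and U : [0,∞) → Mat(r,r) is differentiable with U'(t) = L(t)ᵀ C(t)ᵀ W C(t) L(t), and U(t) is invertible for every t ≥ 0. Then the matrix function P(t) = L(t) U(t)^{-1} L(t)ᵀ is differentiable and satisfies the Riccati equation P'(t) = A(t) P(t) + P(t) A(t)ᵀ − P(t) C(t)ᵀ W C(t) P(t) for all t ≥ 0. -/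
/-!
Write `P = L V Lᵀ` with `V = U⁻¹`. Inverting a differentiable family of invertible matrices gives
`V' = -V U' V = -V Lᵀ Cᵀ W C L V`, so by the product rule
`P' = A L V Lᵀ - L V Lᵀ Cᵀ W C L V Lᵀ + L V Lᵀ Aᵀ = A P + P Aᵀ - P Cᵀ W C P`.
-/

open Matrix

namespace Matrix

variable {l m n : Type*} {f : ℝ → Matrix m n ℝ} {f' : Matrix m n ℝ} {t : ℝ}

theorem hasDerivAt_iff_forall_apply [Fintype n] :
    HasDerivAt f f' t ↔ ∀ i j, HasDerivAt (fun s => f s i j) (f' i j) t :=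
  hasDerivAt_pi.trans (forall_congr' fun _ => hasDerivAt_pi)

theorem _root_.HasDerivAt.matrix_transpose [Fintype m] [Fintype n] (hf : HasDerivAt f f' t) :
    HasDerivAt (fun s => (f s)ᵀ) f'ᵀ t :=
  hasDerivAt_iff_forall_apply.mpr fun i j => hasDerivAt_iff_forall_apply.mp hf j i

theorem _root_.HasDerivAt.matrix_mul [Fintype m] [Fintype n] {g : ℝ → Matrix l m ℝ}
    {g' : Matrix l m ℝ} (hg : HasDerivAt g g' t) (hf : HasDerivAt f f' t) :
    HasDerivAt (fun s => g s * f s) (g' * f t + g t * f') t := by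
  rw [hasDerivAt_iff_forall_apply] at hg hf ⊢
  intro i j
  simp only [mul_apply, add_apply, ← Finset.sum_add_distrib]
  exact HasDerivAt.fun_sum fun k _ => (hg i k).mul (hf k j)

section LinftyOpNorm

attribute [local instance] Matrix.linftyOpNormedAddCommGroup Matrix.linftyOpNormedSpace
  Matrix.linftyOpNormedRing Matrix.linftyOpNormedAlgebra

/- `HasDerivAt` only sees the topology of `Matrix m m ℝ`, so any of the equivalent matrix norms
may be used to reach the derivative of inversion in a complete normed algebra. -/
theorem _root_.HasDerivAt.matrix_inv [Fintype m] [DecidableEq m] {U : ℝ → Matrix m m ℝ}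
    {U' : Matrix m m ℝ} (hU : HasDerivAt U U' t) (hdet : IsUnit (U t).det) :
    HasDerivAt (fun s => (U s)⁻¹) (-((U t)⁻¹ * U' * (U t)⁻¹)) t := by
  obtain ⟨u, hu⟩ := (isUnit_iff_isUnit_det _).mpr hdet
  have hinverse : HasFDerivAt Ring.inverse (-ContinuousLinearMap.mulLeftRight ℝ _ ↑u⁻¹ ↑u⁻¹) (U t) :=
    hu ▸ hasFDerivAt_ringInverse u
  have hcomp := hinverse.comp_hasDerivAt t hU
  rw [show (fun s => (U s)⁻¹) = Ring.inverse ∘ U from funext fun s => nonsing_inv_eq_ringInverse _]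
  exact hcomp.congr_deriv (by simp [← hu, coe_units_inv])

end LinftyOpNorm

theorem productRule_factor_eq_riccati {R : Type*} [CommRing R] [Fintype n] [Fintype m]
    [Fintype l] (A : Matrix n n R) (C : Matrix l n R) (W : Matrix l l R) (L : Matrix n m R)
    (V : Matrix m m R) :
    (A * L * V + L * -(V * (Lᵀ * Cᵀ * W * C * L) * V)) * Lᵀ + L * V * (A * L)ᵀ
      = A * (L * V * Lᵀ) + L * V * Lᵀ * Aᵀ - L * V * Lᵀ * Cᵀ * W * C * (L * V * Lᵀ) := by
  simp only [transpose_mul, Matrix.mul_neg, Matrix.add_mul, Matrix.neg_mul, Matrix.mul_assoc,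
    sub_eq_add_neg]
  abel

end Matrix

theorem reduced_factor_satisfies_riccati_general
    (n m r : ℕ)
    (A : ℝ → Matrix (Fin n) (Fin n) ℝ) (C : ℝ → Matrix (Fin m) (Fin n) ℝ)
    (W : Matrix (Fin m) (Fin m) ℝ)
    (L : ℝ → Matrix (Fin n) (Fin r) ℝ)
    (hL : ∀ t, 0 ≤ t → ∀ i j, HasDerivAt (fun s => L s i j) ((A t * L t) i j) t)
    (U : ℝ → Matrix (Fin r) (Fin r) ℝ)
    (hU : ∀ t, 0 ≤ t → ∀ i j, HasDerivAt (fun s => U s i j)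
      (((L t)ᵀ * (C t)ᵀ * W * C t * L t) i j) t)
    (hUinv : ∀ t, 0 ≤ t → IsUnit (U t).det) :
    ∀ t, 0 ≤ t → ∀ i j, HasDerivAt (fun s => (L s * (U s)⁻¹ * (L s)ᵀ) i j)
      ((A t * (L t * (U t)⁻¹ * (L t)ᵀ) + (L t * (U t)⁻¹ * (L t)ᵀ) * (A t)ᵀ
        - (L t * (U t)⁻¹ * (L t)ᵀ) * (C t)ᵀ * W * (C t) * (L t * (U t)⁻¹ * (L t)ᵀ)) i j) t := by
  intro t ht
  have hLt : HasDerivAt L (A t * L t) t := hasDerivAt_iff_forall_apply.mpr (hL t ht)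
  have hUt := hasDerivAt_iff_forall_apply.mpr (hU t ht)
  have hP := (hLt.matrix_mul (hUt.matrix_inv (hUinv t ht))).matrix_mul hLt.matrix_transpose
  rw [productRule_factor_eq_riccati] at hP
  exact hasDerivAt_iff_forall_apply.mp hP

/-- Reduced-order covariance ansatz of reduced-order Kalman filtering:
if `L' = A L`, `U' = Lᵀ Cᵀ W C L` and `U t` is invertible for `t ≥ 0`, then
`P = L U⁻¹ Lᵀ` is differentiable and satisfies the Riccati equation
`P' = A P + P Aᵀ − P Cᵀ W C P`.  Differentiability of matrix-valued maps is
expressed entrywise via `HasDerivAt`. -/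
theorem reduced_factor_satisfies_riccati
    (n m r : ℕ) (hn : 0 < n) (hm : 0 < m) (hr : 0 < r)
    (A : ℝ → Matrix (Fin n) (Fin n) ℝ) (C : ℝ → Matrix (Fin m) (Fin n) ℝ)
    (hA : ∀ i j, Continuous fun t => A t i j)
    (hC : ∀ i j, Continuous fun t => C t i j)
    (W : Matrix (Fin m) (Fin m) ℝ) (hW : W.PosSemidef)
    (L : ℝ → Matrix (Fin n) (Fin r) ℝ)
    (hL : ∀ t, 0 ≤ t → ∀ i j, HasDerivAt (fun s => L s i j) ((A t * L t) i j) t)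
    (U : ℝ → Matrix (Fin r) (Fin r) ℝ)
    (hU : ∀ t, 0 ≤ t → ∀ i j, HasDerivAt (fun s => U s i j)
      (((L t)ᵀ * (C t)ᵀ * W * C t * L t) i j) t)
    (hUinv : ∀ t, 0 ≤ t → IsUnit (U t).det) :
    ∀ t, 0 ≤ t → ∀ i j, HasDerivAt (fun s => (L s * (U s)⁻¹ * (L s)ᵀ) i j)
      ((A t * (L t * (U t)⁻¹ * (L t)ᵀ) + (L t * (U t)⁻¹ * (L t)ᵀ) * (A t)ᵀ
        - (L t * (U t)⁻¹ * (L t)ᵀ) * (C t)ᵀ * W * (C t) * (L t * (U t)⁻¹ * (L t)ᵀ)) i j) t :=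
  reduced_factor_satisfies_riccati_general n m r A C W L hL U hU hUinv
end

section
/- In the coupled observer error system, the transformed mechanical error δη = x̃^m − L^m δμ is differentiable and satisfies the autonomous (decoupled) dynamics (δη)'(t) = (A^m(t) − K(t) H^m) δη(t) for all t ≥ 0; that is, δη evolves exactly as the error of the Luenberger observer for the mechanical subsystem alone, unaffected by the electrical error or the optimal-filter correction. -/
open Matrix Filter Topology

/-!
Write `F = Aᵐ - K Hᵐ`. Since `(Lᵉ)' = Aᵉ Lᵉ`, the inverse satisfies `((Lᵉ)⁻¹)' = -(Lᵉ)⁻¹ Aᵉ`, so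
the free part `Aᵉ x̃ᵉ` of the electrical error dynamics cancels in `δμ = (Lᵉ)⁻¹ x̃ᵉ` and
`δμ' = -U⁻¹ S`. Differentiating `δη = x̃ᵐ - Lᵐ δμ`, the filter corrections `∓ Lᵐ U⁻¹ S` cancel,
and the coupling `B x̃ᵉ` is cancelled by the `B Lᵉ δμ = B x̃ᵉ` coming from `(Lᵐ)'`, leaving `F δη`.
-/

section MatrixCalculus

variable {l m n : Type*} {t : ℝ}

theorem hasDerivAt_matrix_mul [Fintype m] {A : ℝ → Matrix l m ℝ} {B : ℝ → Matrix m n ℝ}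
    {A' : Matrix l m ℝ} {B' : Matrix m n ℝ}
    (hA : ∀ i j, HasDerivAt (fun s => A s i j) (A' i j) t)
    (hB : ∀ i j, HasDerivAt (fun s => B s i j) (B' i j) t) (i : l) (j : n) :
    HasDerivAt (fun s => (A s * B s) i j) ((A' * B t + A t * B') i j) t := by
  simp only [mul_apply, Matrix.add_apply, ← Finset.sum_add_distrib]
  exact HasDerivAt.fun_sum fun k _ => (hA i k).mul (hB k j)

theorem hasDerivAt_matrix_mulVec [Fintype m] {A : ℝ → Matrix l m ℝ} {v : ℝ → m → ℝ}
    {A' : Matrix l m ℝ} {v' : m → ℝ}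
    (hA : ∀ i j, HasDerivAt (fun s => A s i j) (A' i j) t)
    (hv : ∀ j, HasDerivAt (fun s => v s j) (v' j) t) (i : l) :
    HasDerivAt (fun s => (A s *ᵥ v s) i) ((A' *ᵥ v t + A t *ᵥ v') i) t := by
  simp only [mulVec, dotProduct, Pi.add_apply, ← Finset.sum_add_distrib]
  exact HasDerivAt.fun_sum fun k _ => (hA i k).mul (hv k)

variable [Fintype n] [DecidableEq n]

theorem differentiableAt_matrix_det {A : ℝ → Matrix n n ℝ}
    (hA : ∀ i j, DifferentiableAt ℝ (fun s => A s i j) t) :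
    DifferentiableAt ℝ (fun s => (A s).det) t := by
  simp only [det_apply']
  exact DifferentiableAt.fun_sum fun σ _ =>
    (DifferentiableAt.fun_finsetProd fun k _ => hA (σ k) k).const_mul _

-- Cramer's rule: the entries of `A⁻¹` are polynomials in those of `A` divided by `det A`.
theorem differentiableAt_matrix_inv {A : ℝ → Matrix n n ℝ}
    (hA : ∀ i j, DifferentiableAt ℝ (fun s => A s i j) t) (hdet : IsUnit (A t).det)
    (i j : n) : DifferentiableAt ℝ (fun s => (A s)⁻¹ i j) t := by
  have hadj : DifferentiableAt ℝ (fun s => (A s).adjugate i j) t := by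
    simp only [adjugate_apply]
    refine differentiableAt_matrix_det fun k l => ?_
    rcases eq_or_ne k j with rfl | hk
    · simpa only [updateRow_self] using differentiableAt_const _
    · simpa only [updateRow_ne hk] using hA k l
  simp only [inv_def, Ring.inverse_eq_inv, Matrix.smul_apply, smul_eq_mul]
  exact ((differentiableAt_matrix_det hA).inv hdet.ne_zero).mul hadj

theorem hasDerivAt_matrix_inv {A : ℝ → Matrix n n ℝ} {A' : Matrix n n ℝ}
    (hA : ∀ i j, HasDerivAt (fun s => A s i j) (A' i j) t) (hdet : IsUnit (A t).det)
    (i j : n) :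
    HasDerivAt (fun s => (A s)⁻¹ i j) ((-((A t)⁻¹ * A' * (A t)⁻¹)) i j) t := by
  set D : Matrix n n ℝ := of fun i j => deriv (fun s => (A s)⁻¹ i j) t
  have hInv : ∀ i j, HasDerivAt (fun s => (A s)⁻¹ i j) (D i j) t := fun i j =>
    (differentiableAt_matrix_inv (fun i j => (hA i j).differentiableAt) hdet i j).hasDerivAt
  have hA_mul_inv : ∀ᶠ s in 𝓝 t, A s * (A s)⁻¹ = 1 := by
    have hcont := (differentiableAt_matrix_det fun i j => (hA i j).differentiableAt).continuousAt
    filter_upwards [hcont.eventually_ne hdet.ne_zero] with s hs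
    exact mul_nonsing_inv _ (isUnit_iff_ne_zero.mpr hs)
  have hprod : A' * (A t)⁻¹ + A t * D = 0 := by
    ext a b
    have hconst : HasDerivAt (fun s => (A s * (A s)⁻¹) a b) 0 t :=
      (hasDerivAt_const t ((1 : Matrix n n ℝ) a b)).congr_of_eventuallyEq
        (hA_mul_inv.mono fun s hs => congrFun (congrFun hs a) b)
    exact (hasDerivAt_matrix_mul hA hInv a b).unique hconst
  have hD : D = -((A t)⁻¹ * A' * (A t)⁻¹) := by
    calc D = (A t)⁻¹ * (A t * D) := by rw [← Matrix.mul_assoc, nonsing_inv_mul _ hdet, one_mul]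
      _ = -((A t)⁻¹ * A' * (A t)⁻¹) := by
        rw [eq_neg_of_add_eq_zero_right hprod, Matrix.mul_neg, Matrix.mul_assoc]
  exact hD ▸ hInv i j

end MatrixCalculus

section ObserverError

variable {n p : Type*} [Fintype n] {t : ℝ}

theorem hasDerivAt_inv_fundamental_mulVec [DecidableEq n] {A L : ℝ → Matrix n n ℝ} {x : ℝ → n → ℝ} {c : n → ℝ}
    (hL : ∀ i j, HasDerivAt (fun s => L s i j) ((A t * L t) i j) t) (hdet : IsUnit (L t).det)
    (hx : ∀ i, HasDerivAt (fun s => x s i) ((A t *ᵥ x t - L t *ᵥ c) i) t) (i : n) :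
    HasDerivAt (fun s => ((L s)⁻¹ *ᵥ x s) i) ((-c) i) t := by
  refine (hasDerivAt_matrix_mulVec (hasDerivAt_matrix_inv hL hdet) hx i).congr_deriv
    (congrFun ?_ i)
  have hconj : (L t)⁻¹ * (A t * L t) * (L t)⁻¹ = (L t)⁻¹ * A t := by
    rw [Matrix.mul_assoc, Matrix.mul_assoc, mul_nonsing_inv _ hdet, Matrix.mul_one]
  rw [hconj, neg_mulVec, mulVec_sub, mulVec_mulVec, mulVec_mulVec, nonsing_inv_mul _ hdet,
    one_mulVec]
  abel

theorem hasDerivAt_sub_mulVec_of_sensitivity [Fintype p] {F : ℝ → Matrix p p ℝ}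
    {B Lm : ℝ → Matrix p n ℝ} {Le : ℝ → Matrix n n ℝ} {xm : ℝ → p → ℝ} {xe μ : ℝ → n → ℝ}
    {c : n → ℝ}
    (hLm : ∀ i j, HasDerivAt (fun s => Lm s i j) ((F t * Lm t + B t * Le t) i j) t)
    (hxm : ∀ i, HasDerivAt (fun s => xm s i) ((F t *ᵥ xm t + B t *ᵥ xe t - Lm t *ᵥ c) i) t)
    (hμ : ∀ i, HasDerivAt (fun s => μ s i) ((-c) i) t) (hxe : Le t *ᵥ μ t = xe t) (i : p) :
    HasDerivAt (fun s => (xm s - Lm s *ᵥ μ s) i) ((F t *ᵥ (xm t - Lm t *ᵥ μ t)) i) t := by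
  refine ((hxm i).sub (hasDerivAt_matrix_mulVec hLm hμ i)).congr_deriv ?_
  rw [← Pi.sub_apply, add_mulVec, ← mulVec_mulVec, ← mulVec_mulVec, hxe, mulVec_neg, mulVec_sub]
  exact congrFun (by abel) i

end ObserverError

theorem coupled_observer_mech_error_decoupled_general
    (ne nm me mm : ℕ)
    (Ae : ℝ → Matrix (Fin ne) (Fin ne) ℝ)
    (Am : ℝ → Matrix (Fin nm) (Fin nm) ℝ)
    (B : ℝ → Matrix (Fin nm) (Fin ne) ℝ)
    (K : ℝ → Matrix (Fin nm) (Fin mm) ℝ)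
    (He : Matrix (Fin me) (Fin ne) ℝ) (Hm : Matrix (Fin mm) (Fin nm) ℝ)
    (We : Matrix (Fin me) (Fin me) ℝ) (Wm : Matrix (Fin mm) (Fin mm) ℝ)
    (Le : ℝ → Matrix (Fin ne) (Fin ne) ℝ)
    (hLe : ∀ t, 0 ≤ t → ∀ i j, HasDerivAt (fun s => Le s i j) ((Ae t * Le t) i j) t)
    (hLeInv : ∀ t, 0 ≤ t → IsUnit (Le t).det)
    (Lm : ℝ → Matrix (Fin nm) (Fin ne) ℝ)
    (hLm : ∀ t, 0 ≤ t → ∀ i j, HasDerivAt (fun s => Lm s i j)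
      (((Am t - K t * Hm) * Lm t + B t * Le t) i j) t)
    (U : ℝ → Matrix (Fin ne) (Fin ne) ℝ)
    (xe : ℝ → Fin ne → ℝ) (xm : ℝ → Fin nm → ℝ)
    (hxe : ∀ t, 0 ≤ t → ∀ i, HasDerivAt (fun s => xe s i)
      (((Ae t).mulVec (xe t) - (Le t * (U t)⁻¹).mulVec
        (((Le t)ᵀ * Heᵀ * We * He).mulVec (xe t)
          + ((Lm t)ᵀ * Hmᵀ * Wm * Hm).mulVec (xm t))) i) t)
    (hxm : ∀ t, 0 ≤ t → ∀ i, HasDerivAt (fun s => xm s i)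
      (((Am t - K t * Hm).mulVec (xm t) + (B t).mulVec (xe t)
        - (Lm t * (U t)⁻¹).mulVec
          (((Le t)ᵀ * Heᵀ * We * He).mulVec (xe t)
            + ((Lm t)ᵀ * Hmᵀ * Wm * Hm).mulVec (xm t))) i) t)
    :
    ∀ t, 0 ≤ t → ∀ i, HasDerivAt
      (fun s => (xm s - (Lm s).mulVec ((Le s)⁻¹.mulVec (xe s))) i)
      (((Am t - K t * Hm).mulVec (xm t - (Lm t).mulVec ((Le t)⁻¹.mulVec (xe t)))) i) t := by
  intro t ht
  have hδμ := hasDerivAt_inv_fundamental_mulVec (hLe t ht) (hLeInv t ht)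
    (by simpa only [← mulVec_mulVec] using hxe t ht)
  have hxe_eq : Le t *ᵥ ((Le t)⁻¹ *ᵥ xe t) = xe t := by
    rw [mulVec_mulVec, mul_nonsing_inv _ (hLeInv t ht), one_mulVec]
  exact hasDerivAt_sub_mulVec_of_sensitivity (F := fun s => Am s - K s * Hm) (hLm t ht)
    (by simpa only [← mulVec_mulVec] using hxm t ht) hδμ hxe_eq

/-- Coupled observer error system: the transformed mechanical error
`δη = x̃ᵐ − Lᵐ δμ` (with `δμ = (Lᵉ)⁻¹ x̃ᵉ`) is differentiable and satisfies the
decoupled Luenberger-error dynamics `(δη)' = (Aᵐ − K Hᵐ) δη` on `[0,∞)`. -/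
theorem coupled_observer_mech_error_decoupled
    (ne nm me mm : ℕ) (hne : 0 < ne) (hnm : 0 < nm) (hme : 0 < me) (hmm : 0 < mm)
    (Ae : ℝ → Matrix (Fin ne) (Fin ne) ℝ)
    (Am : ℝ → Matrix (Fin nm) (Fin nm) ℝ)
    (B : ℝ → Matrix (Fin nm) (Fin ne) ℝ)
    (K : ℝ → Matrix (Fin nm) (Fin mm) ℝ)
    (hAe : ∀ i j, Continuous fun t => Ae t i j)
    (hAm : ∀ i j, Continuous fun t => Am t i j)
    (hB : ∀ i j, Continuous fun t => B t i j)
    (hK : ∀ i j, Continuous fun t => K t i j)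
    (He : Matrix (Fin me) (Fin ne) ℝ) (Hm : Matrix (Fin mm) (Fin nm) ℝ)
    (We : Matrix (Fin me) (Fin me) ℝ) (Wm : Matrix (Fin mm) (Fin mm) ℝ)
    (hWe : We.PosSemidef) (hWm : Wm.PosSemidef)
    (Le : ℝ → Matrix (Fin ne) (Fin ne) ℝ)
    (hLe : ∀ t, 0 ≤ t → ∀ i j, HasDerivAt (fun s => Le s i j) ((Ae t * Le t) i j) t)
    (hLe0 : Le 0 = 1)
    (hLeInv : ∀ t, 0 ≤ t → IsUnit (Le t).det)
    (Lm : ℝ → Matrix (Fin nm) (Fin ne) ℝ)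
    (hLm : ∀ t, 0 ≤ t → ∀ i j, HasDerivAt (fun s => Lm s i j)
      (((Am t - K t * Hm) * Lm t + B t * Le t) i j) t)
    (hLm0 : Lm 0 = 0)
    (U : ℝ → Matrix (Fin ne) (Fin ne) ℝ)
    (hU : ∀ t, 0 ≤ t → ∀ i j, HasDerivAt (fun s => U s i j)
      (((Le t)ᵀ * Heᵀ * We * He * Le t + (Lm t)ᵀ * Hmᵀ * Wm * Hm * Lm t) i j) t)
    (hU0 : (U 0).PosDef)
    (hUpos : ∀ t, 0 ≤ t → (U t).PosDef)
    (xe : ℝ → Fin ne → ℝ) (xm : ℝ → Fin nm → ℝ)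
    (hxe : ∀ t, 0 ≤ t → ∀ i, HasDerivAt (fun s => xe s i)
      (((Ae t).mulVec (xe t) - (Le t * (U t)⁻¹).mulVec
        (((Le t)ᵀ * Heᵀ * We * He).mulVec (xe t)
          + ((Lm t)ᵀ * Hmᵀ * Wm * Hm).mulVec (xm t))) i) t)
    (hxm : ∀ t, 0 ≤ t → ∀ i, HasDerivAt (fun s => xm s i)
      (((Am t - K t * Hm).mulVec (xm t) + (B t).mulVec (xe t)
        - (Lm t * (U t)⁻¹).mulVec
          (((Le t)ᵀ * Heᵀ * We * He).mulVec (xe t)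
            + ((Lm t)ᵀ * Hmᵀ * Wm * Hm).mulVec (xm t))) i) t)
    :
    ∀ t, 0 ≤ t → ∀ i, HasDerivAt
      (fun s => (xm s - (Lm s).mulVec ((Le s)⁻¹.mulVec (xe s))) i)
      (((Am t - K t * Hm).mulVec (xm t - (Lm t).mulVec ((Le t)⁻¹.mulVec (xe t)))) i) t :=
  coupled_observer_mech_error_decoupled_general ne nm me mm Ae Am B K He Hm We Wm Le hLe hLeInv Lm
    hLm U xe xm hxe hxm
end

section
/- In the coupled observer error system, the quantity U(t) δμ(t) admits the integral representation U(t) δμ(t) = U(0) δμ(0) − ∫₀ᵗ L^m(s)ᵀ (H^m)ᵀ W^m H^m δη(s) ds for all t ≥ 0; equivalently, d/dt ( U(t) δμ(t) ) = − L^m(t)ᵀ (H^m)ᵀ W^m H^m δη(t). -/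
open Matrix MeasureTheory Filter Topology

/-! Since `Lᵉ` is a fundamental matrix of `x' = Aᵉ x`, the `Aᵉ`-terms cancel in the derivative of
`δμ = (Lᵉ)⁻¹ x̃ᵉ`, leaving `δμ' = -U⁻¹ S`. In `(U δμ)' = U' δμ - S` the term `U' δμ` reproduces
`S` except that `Lᵐ δμ` stands where `S` has `x̃ᵐ`, so only `-(Lᵐ)ᵀ (Hᵐ)ᵀ Wᵐ Hᵐ δη` survives.
The integral form is then the fundamental theorem of calculus, the integrand being continuous
because everything in it is differentiable. -/

section MatrixCalculus

variable {l m n : Type*} [Fintype n] {t : ℝ}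

theorem Matrix.hasDerivAt_iff {M : ℝ → Matrix l n ℝ} {M' : Matrix l n ℝ} :
    HasDerivAt M M' t ↔ ∀ i j, HasDerivAt (fun s => M s i j) (M' i j) t :=
  hasDerivAt_pi.trans (forall_congr' fun _ => hasDerivAt_pi)

variable [Fintype m]

theorem HasDerivAt.matrix_transpose_s4 {M : ℝ → Matrix m n ℝ} {M' : Matrix m n ℝ}
    (hM : HasDerivAt M M' t) : HasDerivAt (fun s => (M s)ᵀ) M'ᵀ t :=
  Matrix.hasDerivAt_iff.mpr fun i j => Matrix.hasDerivAt_iff.mp hM j i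

theorem HasDerivAt.matrix_mul_const {P : ℝ → Matrix l m ℝ} {P' : Matrix l m ℝ}
    (hP : HasDerivAt P P' t) (Q : Matrix m n ℝ) : HasDerivAt (fun s => P s * Q) (P' * Q) t := by
  rw [Matrix.hasDerivAt_iff] at *
  intro i j
  simp only [mul_apply]
  exact HasDerivAt.fun_sum fun k _ => (hP i k).mul_const (Q k j)

theorem HasDerivAt.matrix_mulVec {P : ℝ → Matrix l m ℝ} {v : ℝ → m → ℝ}
    {P' : Matrix l m ℝ} {v' : m → ℝ} (hP : HasDerivAt P P' t) (hv : HasDerivAt v v' t) :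
    HasDerivAt (fun s => P s *ᵥ v s) (P' *ᵥ v t + P t *ᵥ v') t := by
  rw [Matrix.hasDerivAt_iff] at hP
  rw [hasDerivAt_pi] at *
  intro i
  simp only [Pi.add_apply, mulVec, dotProduct, ← Finset.sum_add_distrib]
  exact HasDerivAt.fun_sum fun k _ => ((hP i k).mul (hv k)).congr_deriv (by ring)

variable [DecidableEq m]

theorem HasDerivAt.matrix_inv_s4 {M : ℝ → Matrix m m ℝ} {M' : Matrix m m ℝ}
    (hM : HasDerivAt M M' t) (ht : IsUnit (M t)) :
    HasDerivAt (fun s => (M s)⁻¹) (-((M t)⁻¹ * M' * (M t)⁻¹)) t := by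
  -- Any norm inducing the product topology gives access to difference quotients.
  let _ := Matrix.normedAddCommGroup (m := m) (n := m) (α := ℝ)
  let _ := Matrix.normedSpace (m := m) (n := m) (α := ℝ) (R := ℝ)
  have hdet : IsUnit (M t).det := (isUnit_iff_isUnit_det _).mp ht
  have hinv : ContinuousAt (fun s => (M s)⁻¹) t :=
    (continuousAt_matrix_inv _ (NormedRing.inverse_continuousAt hdet.unit)).comp hM.continuousAt
  have hunit : ∀ᶠ s in 𝓝 t, IsUnit (M s) := by
    filter_upwards [(continuous_id.matrix_det.continuousAt.comp hM.continuousAt).eventually_ne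
      hdet.ne_zero] with s hs
    exact (isUnit_iff_isUnit_det _).mpr (isUnit_iff_ne_zero.mpr hs)
  refine hasDerivAt_iff_tendsto_slope.mpr ?_
  have hlim : Tendsto (fun s => -((M s)⁻¹ * slope M t s * (M t)⁻¹)) (𝓝[≠] t)
      (𝓝 (-((M t)⁻¹ * M' * (M t)⁻¹))) :=
    (((hinv.mono_left nhdsWithin_le_nhds).mul hM.tendsto_slope).mul_const _).neg
  refine hlim.congr' ?_
  filter_upwards [nhdsWithin_le_nhds hunit] with s hs
  rw [slope_def_module, slope_def_module, Matrix.inv_sub_inv (by simp [hs, ht]), ← neg_sub (M s),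
    Matrix.mul_neg, Matrix.neg_mul, smul_neg, Matrix.mul_smul, Matrix.smul_mul]

end MatrixCalculus

section CoupledObserver

variable {n k : Type*} [Fintype n] [DecidableEq n] [Fintype k] {t : ℝ}

theorem HasDerivAt.inv_mulVec_of_fundamental {L : ℝ → Matrix n n ℝ} {x : ℝ → n → ℝ}
    {A : Matrix n n ℝ} {w : n → ℝ} (hL : HasDerivAt L (A * L t) t)
    (hx : HasDerivAt x (A *ᵥ x t - L t *ᵥ w) t) (hLt : IsUnit (L t)) :
    HasDerivAt (fun s => (L s)⁻¹ *ᵥ x s) (-w) t := by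
  have hdet : IsUnit (L t).det := (isUnit_iff_isUnit_det _).mp hLt
  refine ((hL.matrix_inv_s4 hLt).matrix_mulVec hx).congr_deriv ?_
  simp only [Matrix.mul_assoc, mul_nonsing_inv _ hdet, Matrix.mul_one, mulVec_sub, mulVec_mulVec,
    nonsing_inv_mul _ hdet, one_mulVec, neg_mulVec]
  abel

theorem HasDerivAt.mulVec_inv_mulVec_of_observer {L U : ℝ → Matrix n n ℝ} {M : ℝ → Matrix k n ℝ}
    {x : ℝ → n → ℝ} {A C : Matrix n n ℝ} {D : Matrix n k ℝ} {y : k → ℝ}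
    (hL : HasDerivAt L (A * L t) t) (hU : HasDerivAt U (C * L t + D * M t) t)
    (hx : HasDerivAt x (A *ᵥ x t - (L t * (U t)⁻¹) *ᵥ (C *ᵥ x t + D *ᵥ y)) t)
    (hLt : IsUnit (L t)) (hUt : IsUnit (U t)) :
    HasDerivAt (fun s => U s *ᵥ ((L s)⁻¹ *ᵥ x s)) (-(D *ᵥ (y - M t *ᵥ ((L t)⁻¹ *ᵥ x t)))) t := by
  rw [← mulVec_mulVec] at hx
  have hμ := hL.inv_mulVec_of_fundamental hx hLt
  refine (hU.matrix_mulVec hμ).congr_deriv ?_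
  have hLdet : IsUnit (L t).det := (isUnit_iff_isUnit_det _).mp hLt
  have hUdet : IsUnit (U t).det := (isUnit_iff_isUnit_det _).mp hUt
  simp only [mulVec_mulVec, Matrix.add_mul, Matrix.mul_assoc, mul_nonsing_inv _ hLdet, add_mulVec,
    mul_nonsing_inv _ hUdet, Matrix.mul_one, mulVec_neg, one_mulVec, mulVec_sub]
  abel

end CoupledObserver

theorem eq_sub_integral_of_hasDerivAt_neg {E : Type*} [NormedAddCommGroup E] [NormedSpace ℝ E]
    [CompleteSpace E] {f g : ℝ → E} {a b : ℝ} (hf : ∀ s ∈ Set.uIcc a b, HasDerivAt f (-g s) s)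
    (hg : ContinuousOn g (Set.uIcc a b)) :
    f b = f a - ∫ s in a..b, g s := by
  have h := intervalIntegral.integral_eq_sub_of_hasDerivAt hf hg.neg.intervalIntegrable
  rw [intervalIntegral.integral_neg, neg_eq_iff_eq_neg] at h
  rw [h]
  abel

theorem coupled_observer_integral_representation_general
    (ne nm me mm : ℕ)
    (Ae : ℝ → Matrix (Fin ne) (Fin ne) ℝ)
    (Am : ℝ → Matrix (Fin nm) (Fin nm) ℝ)
    (B : ℝ → Matrix (Fin nm) (Fin ne) ℝ)
    (K : ℝ → Matrix (Fin nm) (Fin mm) ℝ)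
    (He : Matrix (Fin me) (Fin ne) ℝ) (Hm : Matrix (Fin mm) (Fin nm) ℝ)
    (We : Matrix (Fin me) (Fin me) ℝ) (Wm : Matrix (Fin mm) (Fin mm) ℝ)
    (Le : ℝ → Matrix (Fin ne) (Fin ne) ℝ)
    (hLe : ∀ t, 0 ≤ t → ∀ i j, HasDerivAt (fun s => Le s i j) ((Ae t * Le t) i j) t)
    (hLeInv : ∀ t, 0 ≤ t → IsUnit (Le t).det)
    (Lm : ℝ → Matrix (Fin nm) (Fin ne) ℝ)
    (hLm : ∀ t, 0 ≤ t → ∀ i j, HasDerivAt (fun s => Lm s i j)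
      (((Am t - K t * Hm) * Lm t + B t * Le t) i j) t)
    (U : ℝ → Matrix (Fin ne) (Fin ne) ℝ)
    (hU : ∀ t, 0 ≤ t → ∀ i j, HasDerivAt (fun s => U s i j)
      (((Le t)ᵀ * Heᵀ * We * He * Le t + (Lm t)ᵀ * Hmᵀ * Wm * Hm * Lm t) i j) t)
    (hUpos : ∀ t, 0 ≤ t → (U t).PosDef)
    (xe : ℝ → Fin ne → ℝ) (xm : ℝ → Fin nm → ℝ)
    (hxe : ∀ t, 0 ≤ t → ∀ i, HasDerivAt (fun s => xe s i)
      (((Ae t).mulVec (xe t) - (Le t * (U t)⁻¹).mulVec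
        (((Le t)ᵀ * Heᵀ * We * He).mulVec (xe t)
          + ((Lm t)ᵀ * Hmᵀ * Wm * Hm).mulVec (xm t))) i) t)
    (hxm : ∀ t, 0 ≤ t → ∀ i, HasDerivAt (fun s => xm s i)
      (((Am t - K t * Hm).mulVec (xm t) + (B t).mulVec (xe t)
        - (Lm t * (U t)⁻¹).mulVec
          (((Le t)ᵀ * Heᵀ * We * He).mulVec (xe t)
            + ((Lm t)ᵀ * Hmᵀ * Wm * Hm).mulVec (xm t))) i) t)
    :
    (∀ t, 0 ≤ t →
      (U t).mulVec ((Le t)⁻¹.mulVec (xe t))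
        = (U 0).mulVec ((Le 0)⁻¹.mulVec (xe 0))
          - ∫ s in (0:ℝ)..t, ((Lm s)ᵀ * Hmᵀ * Wm * Hm).mulVec
              (xm s - (Lm s).mulVec ((Le s)⁻¹.mulVec (xe s))))
    ∧ (∀ t, 0 ≤ t → ∀ i, HasDerivAt
        (fun s => ((U s).mulVec ((Le s)⁻¹.mulVec (xe s))) i)
        ((-(((Lm t)ᵀ * Hmᵀ * Wm * Hm).mulVec
            (xm t - (Lm t).mulVec ((Le t)⁻¹.mulVec (xe t))))) i) t) := by
  set g : ℝ → Fin ne → ℝ := fun s => ((Lm s)ᵀ * Hmᵀ * Wm * Hm) *ᵥ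
    (xm s - Lm s *ᵥ ((Le s)⁻¹ *ᵥ xe s))
  have hLe' : ∀ t, 0 ≤ t → HasDerivAt Le (Ae t * Le t) t := fun t ht =>
    Matrix.hasDerivAt_iff.mpr (hLe t ht)
  have hLm' : ∀ t, 0 ≤ t → HasDerivAt Lm ((Am t - K t * Hm) * Lm t + B t * Le t) t :=
    fun t ht => Matrix.hasDerivAt_iff.mpr (hLm t ht)
  have hLeUnit : ∀ t, 0 ≤ t → IsUnit (Le t) := fun t ht =>
    (isUnit_iff_isUnit_det _).mpr (hLeInv t ht)
  have hderiv : ∀ t, 0 ≤ t → HasDerivAt (fun s => U s *ᵥ ((Le s)⁻¹ *ᵥ xe s)) (-g t) t :=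
    fun t ht => (hLe' t ht).mulVec_inv_mulVec_of_observer (Matrix.hasDerivAt_iff.mpr (hU t ht))
      (hasDerivAt_pi.mpr (hxe t ht)) (hLeUnit t ht) (hUpos t ht).isUnit
  have hg : ∀ t, 0 ≤ t → ContinuousAt g t := by
    intro t ht
    have hδμ := ((hLe' t ht).matrix_inv_s4 (hLeUnit t ht)).matrix_mulVec (hasDerivAt_pi.mpr (hxe t ht))
    have hC := (((hLm' t ht).matrix_transpose_s4.matrix_mul_const Hmᵀ).matrix_mul_const
      Wm).matrix_mul_const Hm
    exact (hC.matrix_mulVec ((hasDerivAt_pi.mpr (hxm t ht)).sub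
      ((hLm' t ht).matrix_mulVec hδμ))).continuousAt
  have hIcc : ∀ t : ℝ, 0 ≤ t → ∀ s ∈ Set.uIcc 0 t, 0 ≤ s := fun t ht s hs =>
    (Set.uIcc_of_le ht ▸ hs).1
  exact ⟨fun t ht => eq_sub_integral_of_hasDerivAt_neg (fun s hs => hderiv s (hIcc t ht s hs))
      fun s hs => (hg s (hIcc t ht s hs)).continuousWithinAt,
    fun t ht => hasDerivAt_pi.mp (hderiv t ht)⟩

/-- Coupled observer error system: integral representation
`U(t) δμ(t) = U(0) δμ(0) − ∫₀ᵗ (Lᵐ)ᵀ (Hᵐ)ᵀ Wᵐ Hᵐ δη ds`, equivalently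
`d/dt (U δμ) = − (Lᵐ)ᵀ (Hᵐ)ᵀ Wᵐ Hᵐ δη`, where `δμ = (Lᵉ)⁻¹ x̃ᵉ` and
`δη = x̃ᵐ − Lᵐ δμ`. -/
theorem coupled_observer_integral_representation
    (ne nm me mm : ℕ) (hne : 0 < ne) (hnm : 0 < nm) (hme : 0 < me) (hmm : 0 < mm)
    (Ae : ℝ → Matrix (Fin ne) (Fin ne) ℝ)
    (Am : ℝ → Matrix (Fin nm) (Fin nm) ℝ)
    (B : ℝ → Matrix (Fin nm) (Fin ne) ℝ)
    (K : ℝ → Matrix (Fin nm) (Fin mm) ℝ)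
    (hAe : ∀ i j, Continuous fun t => Ae t i j)
    (hAm : ∀ i j, Continuous fun t => Am t i j)
    (hB : ∀ i j, Continuous fun t => B t i j)
    (hK : ∀ i j, Continuous fun t => K t i j)
    (He : Matrix (Fin me) (Fin ne) ℝ) (Hm : Matrix (Fin mm) (Fin nm) ℝ)
    (We : Matrix (Fin me) (Fin me) ℝ) (Wm : Matrix (Fin mm) (Fin mm) ℝ)
    (hWe : We.PosSemidef) (hWm : Wm.PosSemidef)
    (Le : ℝ → Matrix (Fin ne) (Fin ne) ℝ)
    (hLe : ∀ t, 0 ≤ t → ∀ i j, HasDerivAt (fun s => Le s i j) ((Ae t * Le t) i j) t)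
    (hLe0 : Le 0 = 1)
    (hLeInv : ∀ t, 0 ≤ t → IsUnit (Le t).det)
    (Lm : ℝ → Matrix (Fin nm) (Fin ne) ℝ)
    (hLm : ∀ t, 0 ≤ t → ∀ i j, HasDerivAt (fun s => Lm s i j)
      (((Am t - K t * Hm) * Lm t + B t * Le t) i j) t)
    (hLm0 : Lm 0 = 0)
    (U : ℝ → Matrix (Fin ne) (Fin ne) ℝ)
    (hU : ∀ t, 0 ≤ t → ∀ i j, HasDerivAt (fun s => U s i j)
      (((Le t)ᵀ * Heᵀ * We * He * Le t + (Lm t)ᵀ * Hmᵀ * Wm * Hm * Lm t) i j) t)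
    (hU0 : (U 0).PosDef)
    (hUpos : ∀ t, 0 ≤ t → (U t).PosDef)
    (xe : ℝ → Fin ne → ℝ) (xm : ℝ → Fin nm → ℝ)
    (hxe : ∀ t, 0 ≤ t → ∀ i, HasDerivAt (fun s => xe s i)
      (((Ae t).mulVec (xe t) - (Le t * (U t)⁻¹).mulVec
        (((Le t)ᵀ * Heᵀ * We * He).mulVec (xe t)
          + ((Lm t)ᵀ * Hmᵀ * Wm * Hm).mulVec (xm t))) i) t)
    (hxm : ∀ t, 0 ≤ t → ∀ i, HasDerivAt (fun s => xm s i)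
      (((Am t - K t * Hm).mulVec (xm t) + (B t).mulVec (xe t)
        - (Lm t * (U t)⁻¹).mulVec
          (((Le t)ᵀ * Heᵀ * We * He).mulVec (xe t)
            + ((Lm t)ᵀ * Hmᵀ * Wm * Hm).mulVec (xm t))) i) t)
    :
    (∀ t, 0 ≤ t →
      (U t).mulVec ((Le t)⁻¹.mulVec (xe t))
        = (U 0).mulVec ((Le 0)⁻¹.mulVec (xe 0))
          - ∫ s in (0:ℝ)..t, ((Lm s)ᵀ * Hmᵀ * Wm * Hm).mulVec
              (xm s - (Lm s).mulVec ((Le s)⁻¹.mulVec (xe s))))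
    ∧ (∀ t, 0 ≤ t → ∀ i, HasDerivAt
        (fun s => ((U s).mulVec ((Le s)⁻¹.mulVec (xe s))) i)
        ((-(((Lm t)ᵀ * Hmᵀ * Wm * Hm).mulVec
            (xm t - (Lm t).mulVec ((Le t)⁻¹.mulVec (xe t))))) i) t) :=
  coupled_observer_integral_representation_general ne nm me mm Ae Am B K He Hm We Wm Le hLe hLeInv
    Lm hLm U hU hUpos xe xm hxe hxm
end

section
/- Let r be a positive integer, let U : [0,∞) → Mat(r,r) be continuously differentiable with U(0) symmetric positive definite and U'(t) symmetric positive semidefinite for every t ≥ 0, and suppose the smallest eigenvalue of U(t) tends to +∞ as t → ∞. Let f : [0,∞) → ℝ^r be continuous with ∫₀^∞ ‖f(s)‖ ds < ∞. Then every differentiable solution z : [0,∞) → ℝ^r of z'(t) = − U(t)^{-1} ( U'(t) z(t) + f(t) ) satisfies z(t) → 0 as t → ∞. -/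
open Matrix MeasureTheory Filter Topology Set

/-!
Writing `w = U z`, the equation says exactly `w' = -f` wherever `U` is invertible, which is the
case as soon as `U t ⪰ 1`; so `w` stays bounded because `‖f‖` is integrable. Once `U t ⪰ c`,
Cauchy–Schwarz gives `c ‖z‖² ≤ ⟪z, U z⟫ ≤ ‖z‖ ‖w‖`, hence `‖z t‖ ≤ ‖w t‖ / c`, and `c` can be
taken arbitrarily large.
-/

theorem abs_apply_le_sqrt_sum_sq {n : Type*} [Fintype n] (x : n → ℝ) (i : n) :
    |x i| ≤ √(∑ j, x j ^ 2) :=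
  Real.abs_le_sqrt (Finset.single_le_sum (fun j _ => sq_nonneg (x j)) (Finset.mem_univ i))

theorem abs_sub_le_setIntegral_Ici_of_hasDerivAt {g g' φ : ℝ → ℝ} {a t : ℝ}
    (hg : ∀ s, a ≤ s → HasDerivAt g (g' s) s) (hφ : IntegrableOn φ (Ici a))
    (hg'φ : ∀ s, a ≤ s → |g' s| ≤ φ s) (ht : a ≤ t) :
    |g t - g a| ≤ ∫ s in Ici a, φ s := by
  have sub_le_integral : ∀ h h' : ℝ → ℝ, (∀ s, a ≤ s → HasDerivAt h (h' s) s) →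
      (∀ s, a ≤ s → h' s ≤ φ s) → h t - h a ≤ ∫ s in a..t, φ s :=
    fun h h' hh hh'φ => intervalIntegral.sub_le_integral_of_hasDeriv_right_of_le ht
      (fun s hs => (hh s hs.1).continuousAt.continuousWithinAt)
      (fun s hs => (hh s hs.1.le).hasDerivWithinAt) (hφ.mono_set Icc_subset_Ici_self)
      (fun s hs => hh'φ s hs.1.le)
  have hup := sub_le_integral g g' hg fun s hs => (le_abs_self _).trans (hg'φ s hs)
  have hlow := sub_le_integral (-g) (-g') (fun s hs => (hg s hs).neg)
    fun s hs => (neg_le_abs _).trans (hg'φ s hs)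
  have hIci : ∫ s in a..t, φ s ≤ ∫ s in Ici a, φ s := by
    rw [intervalIntegral.integral_of_le ht]
    refine setIntegral_mono_set hφ ?_ (Ioc_subset_Icc_self.trans Icc_subset_Ici_self).eventuallyLE
    exact (ae_restrict_iff' measurableSet_Ici).2
      (Eventually.of_forall fun s hs => (abs_nonneg _).trans (hg'φ s hs))
  simp only [Pi.neg_apply] at hlow
  rw [abs_le]
  constructor <;> linarith

namespace Matrix

variable {m n : Type*} [Fintype n]

theorem hasDerivAt_mulVec_apply {A : ℝ → Matrix m n ℝ} {A' : Matrix m n ℝ} {x : ℝ → n → ℝ}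
    {x' : n → ℝ} {t : ℝ} (hA : ∀ i j, HasDerivAt (fun s => A s i j) (A' i j) t)
    (hx : ∀ j, HasDerivAt (fun s => x s j) (x' j) t) (i : m) :
    HasDerivAt (fun s => (A s *ᵥ x s) i) ((A' *ᵥ x t + A t *ᵥ x') i) t := by
  simpa [mulVec, dotProduct, Finset.sum_add_distrib] using
    HasDerivAt.fun_sum (u := Finset.univ) fun j _ => (hA i j).mul (hx j)

theorem sq_dotProduct_le_dotProduct_self_mul (x y : n → ℝ) :
    (x ⬝ᵥ y) ^ 2 ≤ (x ⬝ᵥ x) * (y ⬝ᵥ y) := by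
  simpa only [dotProduct, sq] using Finset.sum_mul_sq_le_sq_mul_sq Finset.univ x y

theorem dotProduct_self_nonneg (x : n → ℝ) : 0 ≤ x ⬝ᵥ x :=
  Finset.sum_nonneg fun i _ => mul_self_nonneg (x i)

theorem dotProduct_self_le_of_abs_le {x b : n → ℝ} (h : ∀ i, |x i| ≤ b i) :
    x ⬝ᵥ x ≤ b ⬝ᵥ b :=
  Finset.sum_le_sum fun i _ => by
    simpa only [abs_mul_abs_self] using
      mul_le_mul (h i) (h i) (abs_nonneg _) ((abs_nonneg _).trans (h i))

theorem tendsto_zero_of_tendsto_dotProduct_self {α : Type*} {l : Filter α} {x : α → n → ℝ}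
    (h : Tendsto (fun a => x a ⬝ᵥ x a) l (𝓝 0)) : Tendsto x l (𝓝 0) := by
  have hsqrt : Tendsto (fun a => √(x a ⬝ᵥ x a)) l (𝓝 0) := by simpa using h.sqrt
  refine squeeze_zero_norm (fun a => (pi_norm_le_iff_of_nonneg (Real.sqrt_nonneg _)).2 fun i => ?_)
    hsqrt
  simpa only [Real.norm_eq_abs, dotProduct, sq] using abs_apply_le_sqrt_sum_sq (x a) i

variable [DecidableEq n]

theorem PosSemidef.mul_dotProduct_self_le {A : Matrix n n ℝ} {c : ℝ}
    (hA : (A - c • 1).PosSemidef) (x : n → ℝ) : c * (x ⬝ᵥ x) ≤ x ⬝ᵥ A *ᵥ x := by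
  have h := hA.dotProduct_mulVec_nonneg x
  rw [star_trivial, sub_mulVec, smul_mulVec, one_mulVec, dotProduct_sub, dotProduct_smul,
    smul_eq_mul] at h
  linarith

theorem PosSemidef.sq_mul_dotProduct_self_le {A : Matrix n n ℝ} {c : ℝ} (hc : 0 ≤ c)
    (hA : (A - c • 1).PosSemidef) (x : n → ℝ) : c ^ 2 * (x ⬝ᵥ x) ≤ A *ᵥ x ⬝ᵥ A *ᵥ x := by
  have hcoer := hA.mul_dotProduct_self_le x
  have hcs := sq_dotProduct_le_dotProduct_self_mul x (A *ᵥ x)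
  have hx := dotProduct_self_nonneg x
  have hAx := dotProduct_self_nonneg (A *ᵥ x)
  rcases hx.eq_or_lt with hx0 | hxpos
  · rw [← hx0, mul_zero]; exact hAx
  · refine le_of_mul_le_mul_left ?_ hxpos
    nlinarith [mul_nonneg hc hx]

theorem PosSemidef.isUnit_det_of_sub_smul_one {A : Matrix n n ℝ} {c : ℝ} (hc : 0 < c)
    (hA : (A - c • 1).PosSemidef) : IsUnit A.det := by
  have hpos : A.PosDef := by simpa using PosDef.posSemidef_add hA (PosDef.one.smul hc)
  exact (isUnit_iff_isUnit_det A).1 hpos.isUnit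

theorem tendsto_zero_of_eventually_posSemidef_sub_smul_one {α : Type*} {l : Filter α}
    {A : α → Matrix n n ℝ} {x : α → n → ℝ} {C : ℝ}
    (hA : ∀ c : ℝ, ∀ᶠ a in l, (A a - c • 1).PosSemidef)
    (hC : ∀ᶠ a in l, A a *ᵥ x a ⬝ᵥ A a *ᵥ x a ≤ C) : Tendsto x l (𝓝 0) := by
  refine tendsto_zero_of_tendsto_dotProduct_self (tendsto_order.2
    ⟨fun b hb => Eventually.of_forall fun a => hb.trans_le (dotProduct_self_nonneg _),
      fun ε hε => ?_⟩)
  set c := |C| / ε + 1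
  have hc : C < c * ε := by
    rw [add_mul, div_mul_cancel₀ _ hε.ne']
    linarith [le_abs_self C]
  have hc₁ : 1 ≤ c := le_add_of_nonneg_left (by positivity)
  filter_upwards [hA c, hC] with a hAa hCa
  by_contra! hεx
  have hsq := hAa.sq_mul_dotProduct_self_le (by positivity) (x a)
  have hcε : c * ε ≤ c ^ 2 * (x a ⬝ᵥ x a) := by
    calc c * ε ≤ c ^ 2 * ε := by
          rw [sq, mul_assoc]; exact le_mul_of_one_le_left (by positivity) hc₁
      _ ≤ c ^ 2 * (x a ⬝ᵥ x a) := by gcongr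
  linarith

end Matrix

theorem forced_gramian_filtered_error_tendsto_zero_general
    (r : ℕ)
    (U U' : ℝ → Matrix (Fin r) (Fin r) ℝ)
    (hUderiv : ∀ t, 0 ≤ t → ∀ i j, HasDerivAt (fun s => U s i j) (U' t i j) t)
    (hUgrow : ∀ c : ℝ, ∃ T : ℝ, ∀ t, T ≤ t → (U t - c • (1 : Matrix (Fin r) (Fin r) ℝ)).PosSemidef)
    (f : ℝ → Fin r → ℝ)
    (hfint : IntegrableOn (fun s => Real.sqrt (∑ i, f s i ^ 2)) (Set.Ici (0 : ℝ)))
    (z : ℝ → Fin r → ℝ)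
    (hz : ∀ t, 0 ≤ t → ∀ i, HasDerivAt (fun s => z s i)
      ((-((U t)⁻¹.mulVec ((U' t).mulVec (z t) + f t))) i) t) :
    Tendsto z atTop (nhds 0) := by
  obtain ⟨T₁, hT₁⟩ := hUgrow 1
  set T := max T₁ 0
  have hw : ∀ t, T ≤ t → ∀ i, HasDerivAt (fun s => (U s *ᵥ z s) i) (-f t i) t := by
    intro t ht i
    have ht₀ : 0 ≤ t := (le_max_right _ _).trans ht
    have hdet := (hT₁ t ((le_max_left _ _).trans ht)).isUnit_det_of_sub_smul_one one_pos
    convert hasDerivAt_mulVec_apply (hUderiv t ht₀) (hz t ht₀) i using 1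
    rw [mulVec_neg, mulVec_mulVec, mul_nonsing_inv _ hdet, one_mulVec]
    simp
  set I := ∫ s in Ici T, √(∑ i, f s i ^ 2)
  set b : Fin r → ℝ := fun i => |(U T *ᵥ z T) i| + I
  have hwb : ∀ t, T ≤ t → ∀ i, |(U t *ᵥ z t) i| ≤ b i := fun t ht i => by
    have := abs_sub_le_setIntegral_Ici_of_hasDerivAt (fun s hs => hw s hs i)
      (hfint.mono_set (Ici_subset_Ici.2 (le_max_right _ _)))
      (fun s _ => by rw [abs_neg]; exact abs_apply_le_sqrt_sum_sq (f s) i) ht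
    linarith [abs_sub_abs_le_abs_sub ((U t *ᵥ z t) i) ((U T *ᵥ z T) i)]
  refine tendsto_zero_of_eventually_posSemidef_sub_smul_one (C := b ⬝ᵥ b)
    (fun c => eventually_atTop.2 (hUgrow c)) ?_
  filter_upwards [eventually_ge_atTop T] with t ht
  exact dotProduct_self_le_of_abs_le (hwb t ht)

/-- Forced reduced error dynamics: if `U` is continuously differentiable on `[0,∞)` with
`U 0` symmetric positive definite and symmetric positive semidefinite derivative `U'`,
the smallest eigenvalue of `U t` tends to `+∞` (expressed, for the symmetric matrices
`U t`, by the equivalent Loewner-order condition `∀ c, U t − c·1 ⪰ 0` for all large `t`),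
and `f` is continuous on `[0,∞)` with finite integral `∫₀^∞ ‖f‖` (Euclidean norm),
then every differentiable solution of `z' = − U⁻¹ (U' z + f)` tends to `0` at `+∞`. -/
theorem forced_gramian_filtered_error_tendsto_zero
    (r : ℕ) (hr : 0 < r)
    (U U' : ℝ → Matrix (Fin r) (Fin r) ℝ)
    (hUderiv : ∀ t, 0 ≤ t → ∀ i j, HasDerivAt (fun s => U s i j) (U' t i j) t)
    (hU'cont : ∀ i j, ContinuousOn (fun t => U' t i j) (Set.Ici (0 : ℝ)))
    (hU0 : (U 0).PosDef)
    (hU'pos : ∀ t, 0 ≤ t → (U' t).PosSemidef)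
    (hUgrow : ∀ c : ℝ, ∃ T : ℝ, ∀ t, T ≤ t → (U t - c • (1 : Matrix (Fin r) (Fin r) ℝ)).PosSemidef)
    (f : ℝ → Fin r → ℝ)
    (hfc : ∀ i, ContinuousOn (fun t => f t i) (Set.Ici (0 : ℝ)))
    (hfint : IntegrableOn (fun s => Real.sqrt (∑ i, f s i ^ 2)) (Set.Ici (0 : ℝ)))
    (z : ℝ → Fin r → ℝ)
    (hz : ∀ t, 0 ≤ t → ∀ i, HasDerivAt (fun s => z s i)
      ((-((U t)⁻¹.mulVec ((U' t).mulVec (z t) + f t))) i) t) :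
    Tendsto z atTop (nhds 0) :=
  forced_gramian_filtered_error_tendsto_zero_general r U U' hUderiv hUgrow f hfint z hz
end

section
/- In the coupled observer error system, assume additionally that: (i) sup_{t≥0} ‖L^e(t)‖ < ∞ and sup_{t≥0} ‖L^m(t)‖ < ∞; (ii) the smallest eigenvalue of U(t) tends to +∞ as t → ∞; and (iii) there exist constants c > 0 and λ > 0 such that ‖δη(t)‖ ≤ c e^{−λ t} for all t ≥ 0 (exponential convergence of the mechanical Luenberger error). Then the linearized estimation errors of the coupled observer converge: x̃^e(t) → 0 and x̃^m(t) → 0 as t → ∞. -/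
/-!
Put `z = U δμ`. Since `Lᵉ δμ = x̃ᵉ`, the output-injection terms cancel in the derivative of `z`,
leaving `z' = −(Lᵐ)ᵀ (Hᵐ)ᵀ Wᵐ Hᵐ δη`, which decays exponentially because `Lᵐ` is bounded; hence
`z` stays bounded. As `U ⪰ c • 1` eventually for every `c`, the estimate `c ‖δμ‖ ≤ nₑ ‖U δμ‖`
(sup norms) forces `δμ → 0`, and then `x̃ᵉ = Lᵉ δμ → 0` and `x̃ᵐ = δη + Lᵐ δμ → 0`.
-/

open Matrix Filter Set Real Topology

namespace Matrix

section Calculus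

variable {𝕜 : Type*} [NontriviallyNormedField 𝕜] {l m n : Type*} [Fintype n]

theorem differentiableAt_det [DecidableEq n] {M : 𝕜 → Matrix n n 𝕜} {x : 𝕜}
    (hM : ∀ i j, DifferentiableAt 𝕜 (fun y => M y i j) x) :
    DifferentiableAt 𝕜 (fun y => (M y).det) x := by
  simp only [det_apply']
  exact .fun_sum fun σ _ => (DifferentiableAt.fun_finsetProd fun i _ => hM (σ i) i).const_mul _

theorem differentiableAt_inv_apply [DecidableEq n] {M : 𝕜 → Matrix n n 𝕜} {x : 𝕜}
    (hM : ∀ i j, DifferentiableAt 𝕜 (fun y => M y i j) x) (hdet : (M x).det ≠ 0) (i j : n) :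
    DifferentiableAt 𝕜 (fun y => (M y)⁻¹ i j) x := by
  simp only [inv_def, smul_apply, Ring.inverse_eq_inv', smul_eq_mul, adjugate_apply]
  refine ((differentiableAt_det hM).inv hdet).mul (differentiableAt_det fun a b => ?_)
  rcases eq_or_ne a j with rfl | ha
  · simpa only [updateRow_self] using differentiableAt_const _
  · simpa only [updateRow_ne ha] using hM a b

theorem hasDerivAt_mul_apply {A : 𝕜 → Matrix l n 𝕜} {B : 𝕜 → Matrix n m 𝕜}
    {A' : Matrix l n 𝕜} {B' : Matrix n m 𝕜} {t : 𝕜}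
    (hA : ∀ i j, HasDerivAt (fun s => A s i j) (A' i j) t)
    (hB : ∀ i j, HasDerivAt (fun s => B s i j) (B' i j) t) (i : l) (j : m) :
    HasDerivAt (fun s => (A s * B s) i j) ((A' * B t + A t * B') i j) t := by
  simpa only [mul_apply, add_apply, Pi.mul_apply, ← Finset.sum_add_distrib] using
    HasDerivAt.fun_sum fun k _ => (hA i k).mul (hB k j)

theorem hasDerivAt_mulVec {M : 𝕜 → Matrix m n 𝕜} {M' : Matrix m n 𝕜} {v : 𝕜 → n → 𝕜}
    {v' : n → 𝕜} {t : 𝕜} (hM : ∀ i j, HasDerivAt (fun s => M s i j) (M' i j) t)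
    (hv : HasDerivAt v v' t) :
    HasDerivAt (fun s => M s *ᵥ v s) (M' *ᵥ v t + M t *ᵥ v') t := by
  refine hasDerivAt_pi.2 fun i => ?_
  simpa only [mulVec, dotProduct, Pi.add_apply, Pi.mul_apply, ← Finset.sum_add_distrib] using
    HasDerivAt.fun_sum fun j _ => (hM i j).mul (hasDerivAt_pi.1 hv j)

theorem hasDerivAt_inv_apply [DecidableEq n] {M : 𝕜 → Matrix n n 𝕜} {M' : Matrix n n 𝕜} {t : 𝕜}
    (hM : ∀ i j, HasDerivAt (fun s => M s i j) (M' i j) t) (hdet : IsUnit (M t).det) (i j : n) :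
    HasDerivAt (fun s => (M s)⁻¹ i j) ((-((M t)⁻¹ * M' * (M t)⁻¹)) i j) t := by
  have hdiff i j := (hM i j).differentiableAt
  set D : Matrix n n 𝕜 := of fun i j => deriv (fun s => (M s)⁻¹ i j) t
  have hinv i j : HasDerivAt (fun s => (M s)⁻¹ i j) (D i j) t :=
    (differentiableAt_inv_apply hdiff hdet.ne_zero i j).hasDerivAt
  -- `M⁻¹ * M = 1` near `t`, so the product rule forces `D * M t + (M t)⁻¹ * M' = 0`.
  have hone : ∀ᶠ s in 𝓝 t, (M s)⁻¹ * M s = 1 :=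
    ((differentiableAt_det hdiff).continuousAt.eventually_ne hdet.ne_zero).mono
      fun s hs => nonsing_inv_mul _ (Ne.isUnit hs)
  have hzero : D * M t + (M t)⁻¹ * M' = 0 := by
    ext a b
    refine (hasDerivAt_mul_apply hinv hM a b).unique ?_
    exact (hasDerivAt_const t ((1 : Matrix n n 𝕜) a b)).congr_of_eventuallyEq
      (hone.mono fun s hs => by simp only [hs])
  have hD : D = -((M t)⁻¹ * M' * (M t)⁻¹) := by
    rw [← neg_mul, ← eq_neg_iff_add_eq_zero.2 hzero, Matrix.mul_assoc, mul_nonsing_inv _ hdet,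
      Matrix.mul_one]
  exact hD ▸ hinv i j

theorem hasDerivAt_inv_mulVec [DecidableEq n] {M : 𝕜 → Matrix n n 𝕜} {M' : Matrix n n 𝕜}
    {v : 𝕜 → n → 𝕜} {v' : n → 𝕜} {t : 𝕜} (hM : ∀ i j, HasDerivAt (fun s => M s i j) (M' i j) t)
    (hv : HasDerivAt v v' t) (hdet : IsUnit (M t).det) :
    HasDerivAt (fun s => (M s)⁻¹ *ᵥ v s) ((M t)⁻¹ *ᵥ (v' - M' *ᵥ ((M t)⁻¹ *ᵥ v t))) t := by
  refine (hasDerivAt_mulVec (hasDerivAt_inv_apply hM hdet) hv).congr_deriv ?_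
  rw [mulVec_sub, neg_mulVec, mulVec_mulVec, mulVec_mulVec, Matrix.mul_assoc]
  abel

end Calculus

end Matrix

section SupNorm

variable {ι m n : Type*} [Fintype m] [Fintype n]

theorem norm_le_sqrt_sum_sq (v : n → ℝ) : ‖v‖ ≤ √(∑ i, v i ^ 2) :=
  (pi_norm_le_iff_of_nonneg (Real.sqrt_nonneg _)).2 fun i => by
    rw [Real.norm_eq_abs, ← Real.sqrt_sq_eq_abs]
    exact Real.sqrt_le_sqrt (Finset.single_le_sum (fun j _ => sq_nonneg (v j)) (Finset.mem_univ i))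

theorem abs_dotProduct_le (v w : n → ℝ) : |v ⬝ᵥ w| ≤ Fintype.card n * (‖v‖ * ‖w‖) :=
  calc |v ⬝ᵥ w| ≤ ∑ i, |v i * w i| := Finset.abs_sum_le_sum_abs _ _
    _ ≤ ∑ _i : n, ‖v‖ * ‖w‖ := Finset.sum_le_sum fun i _ => by
        rw [abs_mul]
        exact mul_le_mul (norm_le_pi_norm v i) (norm_le_pi_norm w i) (abs_nonneg _) (norm_nonneg _)
    _ = _ := by simp

theorem Matrix.norm_mulVec_le_of_abs_le {M : Matrix m n ℝ} {C : ℝ} (hC0 : 0 ≤ C)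
    (hC : ∀ i j, |M i j| ≤ C) (v : n → ℝ) : ‖M *ᵥ v‖ ≤ Fintype.card n * C * ‖v‖ :=
  (pi_norm_le_iff_of_nonneg (by positivity)).2 fun i =>
    calc ‖(M *ᵥ v) i‖ ≤ ∑ j, |M i j * v j| := Finset.abs_sum_le_sum_abs _ _
    _ ≤ ∑ _j : n, C * ‖v‖ := Finset.sum_le_sum fun j _ => by
        rw [abs_mul]
        exact mul_le_mul (hC i j) (norm_le_pi_norm v j) (abs_nonneg _) hC0
    _ = _ := by simp [mul_assoc]

theorem exists_forall_norm_mulVec_le_mul {s : Set ι} {M : ι → Matrix m n ℝ} {v : ι → n → ℝ}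
    {g : ι → ℝ} (hM : ∃ C, ∀ t ∈ s, ∀ i j, |M t i j| ≤ C) (hv : ∃ C, ∀ t ∈ s, ‖v t‖ ≤ C * g t) :
    ∃ C, ∀ t ∈ s, ‖M t *ᵥ v t‖ ≤ C * g t := by
  obtain ⟨CM, hCM⟩ := hM
  obtain ⟨Cv, hCv⟩ := hv
  have hK : 0 ≤ Fintype.card n * max CM 0 := by positivity
  refine ⟨Fintype.card n * max CM 0 * Cv, fun t ht => ?_⟩
  calc ‖M t *ᵥ v t‖ ≤ Fintype.card n * max CM 0 * ‖v t‖ :=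
        norm_mulVec_le_of_abs_le (le_max_right _ _)
          (fun i j => (hCM t ht i j).trans (le_max_left _ _)) _
    _ ≤ Fintype.card n * max CM 0 * (Cv * g t) := mul_le_mul_of_nonneg_left (hCv t ht) hK
    _ = _ := by ring

theorem tendsto_mulVec_zero_of_abs_le {l : Filter ι} {M : ι → Matrix m n ℝ} {v : ι → n → ℝ} {C : ℝ}
    (hM : ∀ᶠ t in l, ∀ i j, |M t i j| ≤ C) (hv : Tendsto v l (𝓝 0)) :
    Tendsto (fun t => M t *ᵥ v t) l (𝓝 0) := by
  refine squeeze_zero_norm' (hM.mono fun t ht => norm_mulVec_le_of_abs_le (le_max_right C 0)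
    (fun i j => (ht i j).trans (le_max_left _ _)) (v t)) ?_
  simpa using (tendsto_norm_zero.comp hv).const_mul (Fintype.card n * max C 0)

theorem Matrix.PosSemidef.mul_norm_le_of_sub_smul_one [DecidableEq n] {A : Matrix n n ℝ} {c : ℝ}
    (hc : 0 ≤ c) (hA : (A - c • 1).PosSemidef) (v : n → ℝ) :
    c * ‖v‖ ≤ Fintype.card n * ‖A *ᵥ v‖ := by
  have hquad : c * (v ⬝ᵥ v) ≤ v ⬝ᵥ (A *ᵥ v) := by
    have := hA.dotProduct_mulVec_nonneg v
    rw [star_trivial, sub_mulVec, smul_mulVec, one_mulVec, dotProduct_sub, dotProduct_smul,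
      smul_eq_mul] at this
    linarith
  have hsq : ‖v‖ ^ 2 ≤ v ⬝ᵥ v := by
    calc ‖v‖ ^ 2 ≤ √(∑ i, v i ^ 2) ^ 2 := pow_le_pow_left₀ (norm_nonneg _) (norm_le_sqrt_sum_sq v) 2
      _ = v ⬝ᵥ v := by rw [Real.sq_sqrt (by positivity)]; simp [dotProduct, sq]
  have hcs := (le_abs_self _).trans (abs_dotProduct_le v (A *ᵥ v))
  rcases (norm_nonneg v).eq_or_lt with hv | hv
  · rw [← hv, mul_zero]
    positivity
  · refine le_of_mul_le_mul_right ?_ hv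
    nlinarith [mul_le_mul_of_nonneg_left hsq hc]

theorem tendsto_zero_of_posSemidef_sub_smul_one [DecidableEq n] {l : Filter ι}
    {A : ι → Matrix n n ℝ} {v : ι → n → ℝ} {M : ℝ}
    (hA : ∀ c : ℝ, ∀ᶠ t in l, (A t - c • 1).PosSemidef) (hv : ∀ᶠ t in l, ‖A t *ᵥ v t‖ ≤ M) :
    Tendsto v l (𝓝 0) := by
  refine NormedAddGroup.tendsto_nhds_zero.2 fun ε hε => ?_
  set K := Fintype.card n * |M|
  have hK : 0 ≤ K := by positivity
  filter_upwards [hA ((K + 1) / ε), hv] with t hAt hvt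
  have hcoer := hAt.mul_norm_le_of_sub_smul_one (by positivity) (v t)
  have hbound : (K + 1) / ε * ‖v t‖ ≤ K :=
    hcoer.trans (mul_le_mul_of_nonneg_left (hvt.trans (le_abs_self M)) (by positivity))
  rw [div_mul_eq_mul_div, div_le_iff₀ hε] at hbound
  nlinarith [norm_nonneg (v t)]

end SupNorm

section ExponentialDecay

theorem norm_le_of_norm_deriv_le_mul_exp {E : Type*} [NormedAddCommGroup E] [NormedSpace ℝ E]
    {f f' : ℝ → E} {C lam : ℝ} (hlam : 0 < lam) (hf : ∀ t, 0 ≤ t → HasDerivAt f (f' t) t)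
    (hf' : ∀ t, 0 ≤ t → ‖f' t‖ ≤ C * exp (-(lam * t))) {t : ℝ} (ht : 0 ≤ t) :
    ‖f t‖ ≤ ‖f 0‖ + C / lam := by
  have hC : 0 ≤ C := by simpa using (norm_nonneg _).trans (hf' 0 le_rfl)
  -- `‖f 0‖ + ∫₀ˣ C e^{-λs} ds` is a barrier for `‖f‖`.
  have hB (x : ℝ) : HasDerivAt (fun x => ‖f 0‖ + C / lam * (1 - exp (-(lam * x))))
      (C * exp (-(lam * x))) x := by
    refine (((((hasDerivAt_id' x).const_mul lam).fun_neg.exp.const_sub 1).const_mul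
      (C / lam)).const_add ‖f 0‖).congr_deriv ?_
    field_simp
  have hbarrier := image_norm_le_of_norm_deriv_right_le_deriv_boundary (a := 0) (b := t)
    (fun x hx => (hf x hx.1).continuousAt.continuousWithinAt)
    (fun x hx => (hf x hx.1).hasDerivWithinAt) (by simp) hB (fun x hx => hf' x hx.1) ⟨ht, le_rfl⟩
  nlinarith [mul_nonneg (div_nonneg hC hlam.le) (exp_pos (-(lam * t))).le]

theorem tendsto_zero_of_norm_le_mul_exp {E : Type*} [NormedAddCommGroup E] {v : ℝ → E}
    {C lam : ℝ} (hlam : 0 < lam) (hv : ∀ t, 0 ≤ t → ‖v t‖ ≤ C * exp (-(lam * t))) :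
    Tendsto v atTop (𝓝 0) :=
  squeeze_zero_norm' (eventually_atTop.2 ⟨0, hv⟩) <| by
    simpa using (tendsto_exp_neg_atTop_nhds_zero.comp (tendsto_id.const_mul_atTop hlam)).const_mul C

end ExponentialDecay

section ObserverError

variable {𝕜 : Type*} [NontriviallyNormedField 𝕜] {m n : Type*} [Fintype m] [Fintype n]
  [DecidableEq n]

theorem hasDerivAt_mulVec_inv_mulVec_of_observerError {Le U : 𝕜 → Matrix n n 𝕜}
    {xe : 𝕜 → n → 𝕜} {Ae Pe : Matrix n n 𝕜} {Pm : Matrix n m 𝕜} {Lm : Matrix m n 𝕜}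
    {xm : m → 𝕜} {t : 𝕜} (hLe : ∀ i j, HasDerivAt (fun s => Le s i j) ((Ae * Le t) i j) t)
    (hU : ∀ i j, HasDerivAt (fun s => U s i j) ((Pe * Le t + Pm * Lm) i j) t)
    (hxe : HasDerivAt xe (Ae *ᵥ xe t - (Le t * (U t)⁻¹) *ᵥ (Pe *ᵥ xe t + Pm *ᵥ xm)) t)
    (hLe_det : IsUnit (Le t).det) (hU_det : IsUnit (U t).det) :
    HasDerivAt (fun s => U s *ᵥ ((Le s)⁻¹ *ᵥ xe s))
      (-Pm *ᵥ (xm - Lm *ᵥ ((Le t)⁻¹ *ᵥ xe t))) t := by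
  refine (hasDerivAt_mulVec hU (hasDerivAt_inv_mulVec hLe hxe hLe_det)).congr_deriv ?_
  have hxe_eq : Le t *ᵥ ((Le t)⁻¹ *ᵥ xe t) = xe t := by
    rw [mulVec_mulVec, mul_nonsing_inv _ hLe_det, one_mulVec]
  have hS (S : n → 𝕜) : U t *ᵥ ((Le t)⁻¹ *ᵥ ((Le t * (U t)⁻¹) *ᵥ S)) = S := by
    rw [mulVec_mulVec S, ← Matrix.mul_assoc, nonsing_inv_mul _ hLe_det, Matrix.one_mul,
      mulVec_mulVec, mul_nonsing_inv _ hU_det, one_mulVec]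
  rw [← mulVec_mulVec _ Ae, hxe_eq, sub_sub_cancel_left, mulVec_neg, mulVec_neg, hS, add_mulVec,
    ← mulVec_mulVec _ Pe, hxe_eq, ← mulVec_mulVec _ Pm, neg_mulVec, mulVec_sub]
  abel

end ObserverError

theorem coupled_observer_errors_tendsto_zero_general
    (ne nm me mm : ℕ)
    (Ae : ℝ → Matrix (Fin ne) (Fin ne) ℝ)
    (He : Matrix (Fin me) (Fin ne) ℝ) (Hm : Matrix (Fin mm) (Fin nm) ℝ)
    (We : Matrix (Fin me) (Fin me) ℝ) (Wm : Matrix (Fin mm) (Fin mm) ℝ)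
    (Le : ℝ → Matrix (Fin ne) (Fin ne) ℝ)
    (hLe : ∀ t, 0 ≤ t → ∀ i j, HasDerivAt (fun s => Le s i j) ((Ae t * Le t) i j) t)
    (hLeInv : ∀ t, 0 ≤ t → IsUnit (Le t).det)
    (Lm : ℝ → Matrix (Fin nm) (Fin ne) ℝ)
    (U : ℝ → Matrix (Fin ne) (Fin ne) ℝ)
    (hU : ∀ t, 0 ≤ t → ∀ i j, HasDerivAt (fun s => U s i j)
      (((Le t)ᵀ * Heᵀ * We * He * Le t + (Lm t)ᵀ * Hmᵀ * Wm * Hm * Lm t) i j) t)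
    (hUpos : ∀ t, 0 ≤ t → (U t).PosDef)
    (xe : ℝ → Fin ne → ℝ) (xm : ℝ → Fin nm → ℝ)
    (hxe : ∀ t, 0 ≤ t → ∀ i, HasDerivAt (fun s => xe s i)
      (((Ae t).mulVec (xe t) - (Le t * (U t)⁻¹).mulVec
        (((Le t)ᵀ * Heᵀ * We * He).mulVec (xe t)
          + ((Lm t)ᵀ * Hmᵀ * Wm * Hm).mulVec (xm t))) i) t)
    (hLeBdd : ∃ CL : ℝ, ∀ t, 0 ≤ t → ∀ i j, |Le t i j| ≤ CL)
    (hLmBdd : ∃ CL : ℝ, ∀ t, 0 ≤ t → ∀ i j, |Lm t i j| ≤ CL)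
    (hUgrow : ∀ c : ℝ, ∃ T : ℝ, ∀ t, T ≤ t →
      (U t - c • (1 : Matrix (Fin ne) (Fin ne) ℝ)).PosSemidef)
    (hEta : ∃ C lam : ℝ, 0 < C ∧ 0 < lam ∧ ∀ t, 0 ≤ t →
      Real.sqrt (∑ i, (xm t - (Lm t).mulVec ((Le t)⁻¹.mulVec (xe t))) i ^ 2)
        ≤ C * Real.exp (-(lam * t))) :
    Tendsto xe atTop (nhds 0) ∧ Tendsto xm atTop (nhds 0) := by
  obtain ⟨C, lam, -, hlam, hη⟩ := hEta
  obtain ⟨CE, hCE⟩ := hLeBdd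
  obtain ⟨CL, hCL⟩ := hLmBdd
  set μ : ℝ → Fin ne → ℝ := fun t => (Le t)⁻¹ *ᵥ xe t
  set η : ℝ → Fin nm → ℝ := fun t => xm t - Lm t *ᵥ μ t
  have hz (t : ℝ) (ht : 0 ≤ t) :
      HasDerivAt (fun s => U s *ᵥ μ s) (-((Lm t)ᵀ * Hmᵀ * Wm * Hm) *ᵥ η t) t :=
    hasDerivAt_mulVec_inv_mulVec_of_observerError (hLe t ht) (hU t ht)
      (hasDerivAt_pi.2 (hxe t ht)) (hLeInv t ht)
      ((isUnit_iff_isUnit_det _).1 (hUpos t ht).isUnit)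
  obtain ⟨CQ, hCQ⟩ := Finite.exists_le fun p : Fin nm × Fin nm => |(Hmᵀ * Wm * Hm) p.1 p.2|
  obtain ⟨K, hK⟩ := exists_forall_norm_mulVec_le_mul (s := Ici 0) (M := fun t => (Lm t)ᵀ)
    ⟨CL, fun t ht i j => hCL t ht j i⟩
    (exists_forall_norm_mulVec_le_mul (M := fun _ => Hmᵀ * Wm * Hm) ⟨CQ, fun _ _ i j => hCQ (i, j)⟩
      ⟨C, fun t ht => (norm_le_sqrt_sum_sq _).trans (hη t ht)⟩)
  have hz_bdd (t : ℝ) (ht : 0 ≤ t) : ‖U t *ᵥ μ t‖ ≤ ‖U 0 *ᵥ μ 0‖ + K / lam :=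
    norm_le_of_norm_deriv_le_mul_exp hlam hz (fun t ht => by
      rw [neg_mulVec, norm_neg, Matrix.mul_assoc, Matrix.mul_assoc, ← Matrix.mul_assoc Hmᵀ,
        ← mulVec_mulVec]
      exact hK t ht) ht
  have hμ : Tendsto μ atTop (𝓝 0) := tendsto_zero_of_posSemidef_sub_smul_one
    (fun c => eventually_atTop.2 (hUgrow c)) (eventually_atTop.2 ⟨0, hz_bdd⟩)
  have hη0 : Tendsto η atTop (𝓝 0) :=
    tendsto_zero_of_norm_le_mul_exp hlam fun t ht => (norm_le_sqrt_sum_sq _).trans (hη t ht)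
  refine ⟨(tendsto_mulVec_zero_of_abs_le (eventually_atTop.2 ⟨0, hCE⟩) hμ).congr' ?_, ?_⟩
  · filter_upwards [eventually_ge_atTop 0] with t ht
    rw [mulVec_mulVec, mul_nonsing_inv _ (hLeInv t ht), one_mulVec]
  · have hsum := hη0.add (tendsto_mulVec_zero_of_abs_le (eventually_atTop.2 ⟨0, hCL⟩) hμ)
    rw [add_zero] at hsum
    exact hsum.congr fun t => sub_add_cancel _ _

/-- Convergence of the coupled observer: if `Lᵉ` and `Lᵐ` are bounded on `[0,∞)`,
the smallest eigenvalue of `U t` tends to `+∞` (expressed, for the symmetric matrices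
`U t`, by the equivalent Loewner condition `∀ c, U t − c·1 ⪰ 0` for large `t`), and the
transformed mechanical error `δη = x̃ᵐ − Lᵐ (Lᵉ)⁻¹ x̃ᵉ` converges exponentially to `0`
(Euclidean norm), then the linearized estimation errors converge: `x̃ᵉ → 0` and
`x̃ᵐ → 0` as `t → ∞`. -/
theorem coupled_observer_errors_tendsto_zero
    (ne nm me mm : ℕ) (hne : 0 < ne) (hnm : 0 < nm) (hme : 0 < me) (hmm : 0 < mm)
    (Ae : ℝ → Matrix (Fin ne) (Fin ne) ℝ)
    (Am : ℝ → Matrix (Fin nm) (Fin nm) ℝ)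
    (B : ℝ → Matrix (Fin nm) (Fin ne) ℝ)
    (K : ℝ → Matrix (Fin nm) (Fin mm) ℝ)
    (hAe : ∀ i j, Continuous fun t => Ae t i j)
    (hAm : ∀ i j, Continuous fun t => Am t i j)
    (hB : ∀ i j, Continuous fun t => B t i j)
    (hK : ∀ i j, Continuous fun t => K t i j)
    (He : Matrix (Fin me) (Fin ne) ℝ) (Hm : Matrix (Fin mm) (Fin nm) ℝ)
    (We : Matrix (Fin me) (Fin me) ℝ) (Wm : Matrix (Fin mm) (Fin mm) ℝ)
    (hWe : We.PosSemidef) (hWm : Wm.PosSemidef)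
    (Le : ℝ → Matrix (Fin ne) (Fin ne) ℝ)
    (hLe : ∀ t, 0 ≤ t → ∀ i j, HasDerivAt (fun s => Le s i j) ((Ae t * Le t) i j) t)
    (hLe0 : Le 0 = 1)
    (hLeInv : ∀ t, 0 ≤ t → IsUnit (Le t).det)
    (Lm : ℝ → Matrix (Fin nm) (Fin ne) ℝ)
    (hLm : ∀ t, 0 ≤ t → ∀ i j, HasDerivAt (fun s => Lm s i j)
      (((Am t - K t * Hm) * Lm t + B t * Le t) i j) t)
    (hLm0 : Lm 0 = 0)
    (U : ℝ → Matrix (Fin ne) (Fin ne) ℝ)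
    (hU : ∀ t, 0 ≤ t → ∀ i j, HasDerivAt (fun s => U s i j)
      (((Le t)ᵀ * Heᵀ * We * He * Le t + (Lm t)ᵀ * Hmᵀ * Wm * Hm * Lm t) i j) t)
    (hU0 : (U 0).PosDef)
    (hUpos : ∀ t, 0 ≤ t → (U t).PosDef)
    (xe : ℝ → Fin ne → ℝ) (xm : ℝ → Fin nm → ℝ)
    (hxe : ∀ t, 0 ≤ t → ∀ i, HasDerivAt (fun s => xe s i)
      (((Ae t).mulVec (xe t) - (Le t * (U t)⁻¹).mulVec
        (((Le t)ᵀ * Heᵀ * We * He).mulVec (xe t)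
          + ((Lm t)ᵀ * Hmᵀ * Wm * Hm).mulVec (xm t))) i) t)
    (hxm : ∀ t, 0 ≤ t → ∀ i, HasDerivAt (fun s => xm s i)
      (((Am t - K t * Hm).mulVec (xm t) + (B t).mulVec (xe t)
        - (Lm t * (U t)⁻¹).mulVec
          (((Le t)ᵀ * Heᵀ * We * He).mulVec (xe t)
            + ((Lm t)ᵀ * Hmᵀ * Wm * Hm).mulVec (xm t))) i) t)
    (hLeBdd : ∃ CL : ℝ, ∀ t, 0 ≤ t → ∀ i j, |Le t i j| ≤ CL)
    (hLmBdd : ∃ CL : ℝ, ∀ t, 0 ≤ t → ∀ i j, |Lm t i j| ≤ CL)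
    (hUgrow : ∀ c : ℝ, ∃ T : ℝ, ∀ t, T ≤ t →
      (U t - c • (1 : Matrix (Fin ne) (Fin ne) ℝ)).PosSemidef)
    (hEta : ∃ C lam : ℝ, 0 < C ∧ 0 < lam ∧ ∀ t, 0 ≤ t →
      Real.sqrt (∑ i, (xm t - (Lm t).mulVec ((Le t)⁻¹.mulVec (xe t))) i ^ 2)
        ≤ C * Real.exp (-(lam * t))) :
    Tendsto xe atTop (nhds 0) ∧ Tendsto xm atTop (nhds 0) :=
  coupled_observer_errors_tendsto_zero_general ne nm me mm Ae He Hm We Wm Le hLe hLeInv Lm U hU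
    hUpos xe xm hxe hLeBdd hLmBdd hUgrow hEta
end
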